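/- arXiv:1512.07400 — 2 statements merged into one kernel-verified Lean document; each statement's English description precedes it below -/
import Mathlib

section
/- Let f: Z^d → R with ‖Δ²f‖_∞ := sup_X max_{j,k} |Δ²_{jk} f(X)| < ∞. Then for all X ∈ Z^d and J ∈ Z^d, |f(X + J) − f(X) − Σ_{s=1}^d J_s Δ_s f(X)| ≤ (1/2)|J|_1 (|J|_1 + 1) ‖Δ²f‖_∞, where |J|_1 = Σ_s |J_s|. -/
/-!
Write `J` as a path of `|J|₁` unit steps `±e_t`, each increasing the `ℓ¹` norm by one. The
Lipschitz-type bound `‖Δ_t f (X + K) - Δ_t f X‖ ≤ |K|₁ C` (walk along such a path, each step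
costing one second difference) shows that the first-order remainder changes by at most
`m C` at the `m`-th step, and `∑_{m=1}^{n} m = n (n + 1) / 2`.
-/

open Finset fwdDiff

section L1Norm

variable {ι : Type*} [Fintype ι]

def l1Norm (J : ι → ℤ) : ℕ := ∑ s, (J s).natAbs

lemma l1Norm_eq_zero {J : ι → ℤ} : l1Norm J = 0 ↔ J = 0 := by
  simp [l1Norm, Finset.sum_eq_zero_iff, funext_iff]

lemma cast_l1Norm (J : ι → ℤ) : ((l1Norm J : ℕ) : ℝ) = ((∑ s, |J s| : ℤ) : ℝ) := by
  simp [l1Norm, Nat.cast_natAbs]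

variable [DecidableEq ι]

lemma l1Norm_add_single_add (J : ι → ℤ) (t : ι) (c : ℤ) :
    l1Norm (J + Pi.single t c) + (J t).natAbs = l1Norm J + (J t + c).natAbs := by
  have h_off : ∑ s ∈ univ.erase t, ((J + Pi.single t c : ι → ℤ) s).natAbs
      = ∑ s ∈ univ.erase t, (J s).natAbs :=
    sum_congr rfl fun s hs => by simp [Pi.single_eq_of_ne (ne_of_mem_erase hs)]
  rw [l1Norm, l1Norm, ← add_sum_erase _ _ (mem_univ t), ← add_sum_erase _ _ (mem_univ t), h_off]
  simp only [Pi.add_apply, Pi.single_eq_same]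
  ring

lemma exists_eq_add_single_of_ne_zero {J : ι → ℤ} (hJ : J ≠ 0) :
    ∃ K t ε, (ε = 1 ∨ ε = -1) ∧ J = K + Pi.single t ε ∧ l1Norm J = l1Norm K + 1 := by
  obtain ⟨t, ht : J t ≠ 0⟩ := Function.ne_iff.mp hJ
  obtain ⟨ε, hε, habs⟩ : ∃ ε : ℤ, (ε = 1 ∨ ε = -1) ∧ (J t - ε).natAbs + 1 = (J t).natAbs := by
    rcases lt_or_gt_of_ne ht with h | h
    · exact ⟨-1, .inr rfl, by omega⟩
    · exact ⟨1, .inl rfl, by omega⟩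
  refine ⟨J - Pi.single t ε, t, ε, hε, (sub_add_cancel _ _).symm, ?_⟩
  have h := l1Norm_add_single_add (J - Pi.single t ε) t ε
  rw [sub_add_cancel, Pi.sub_apply, Pi.single_eq_same, sub_add_cancel] at h
  omega

theorem l1Norm_induction {P : (ι → ℤ) → Prop} (zero : P 0)
    (step : ∀ J t ε, (ε = 1 ∨ ε = -1) → l1Norm (J + Pi.single t ε) = l1Norm J + 1 →
      P J → P (J + Pi.single t ε))
    (J : ι → ℤ) : P J := by
  suffices ∀ n J, l1Norm J = n → P J from this _ J rfl
  intro n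
  induction n with
  | zero => intro J hJ; rwa [l1Norm_eq_zero.1 hJ]
  | succ n ih =>
    intro J hJ
    obtain ⟨K, t, ε, hε, rfl, hK⟩ :=
      exists_eq_add_single_of_ne_zero (J := J) fun h => by simp [h, l1Norm] at hJ
    exact step K t ε hε hK (ih K (by omega))

end L1Norm

section Lattice

variable {ι E : Type*} [DecidableEq ι] [SeminormedAddCommGroup E] {C : ℝ}

lemma norm_sub_le_of_norm_fwdDiff_le {g : (ι → ℤ) → E}
    (hg : ∀ Y t, ‖Δ_[Pi.single t 1] g Y‖ ≤ C) (Y : ι → ℤ) (t : ι) {ε : ℤ}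
    (hε : ε = 1 ∨ ε = -1) : ‖g (Y + Pi.single t ε) - g Y‖ ≤ C := by
  rcases hε with rfl | rfl
  · exact hg Y t
  · rw [norm_sub_rev]
    have h := hg (Y + Pi.single t (-1)) t
    rwa [fwdDiff, Pi.single_neg, neg_add_cancel_right, ← Pi.single_neg] at h

variable [Fintype ι]

lemma norm_sub_le_l1Norm_mul {g : (ι → ℤ) → E}
    (hg : ∀ Y t, ‖Δ_[Pi.single t 1] g Y‖ ≤ C) (X K : ι → ℤ) :
    ‖g (X + K) - g X‖ ≤ l1Norm K * C := by
  induction K using l1Norm_induction with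
  | zero => simp [l1Norm]
  | step J t ε hε hJ ih =>
    calc ‖g (X + (J + Pi.single t ε)) - g X‖
        = ‖(g (X + J + Pi.single t ε) - g (X + J)) + (g (X + J) - g X)‖ := by
          rw [add_assoc, sub_add_sub_cancel]
      _ ≤ C + l1Norm J * C := norm_add_le_of_le (norm_sub_le_of_norm_fwdDiff_le hg _ t hε) ih
      _ = l1Norm (J + Pi.single t ε) * C := by rw [hJ]; push_cast; ring

def firstOrderRemainder (f : (ι → ℤ) → E) (X J : ι → ℤ) : E :=
  f (X + J) - f X - ∑ s, J s • Δ_[Pi.single s 1] f X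

lemma firstOrderRemainder_add_single (f : (ι → ℤ) → E) (X J : ι → ℤ) (t : ι) (ε : ℤ) :
    firstOrderRemainder f X (J + Pi.single t ε) = firstOrderRemainder f X J
      + (f (X + J + Pi.single t ε) - f (X + J) - ε • Δ_[Pi.single t 1] f X) := by
  simp only [firstOrderRemainder, Pi.add_apply, add_smul, sum_add_distrib, Pi.single_apply,
    ite_smul, zero_smul, sum_ite_eq', mem_univ, if_true, add_assoc]
  abel

variable {f : (ι → ℤ) → E}
  (hC : ∀ Y j k, ‖Δ_[Pi.single j 1] (Δ_[Pi.single k 1] f) Y‖ ≤ C)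
include hC

lemma norm_step_sub_smul_fwdDiff_le (X J : ι → ℤ) (t : ι) {ε : ℤ} (hε : ε = 1 ∨ ε = -1)
    (hJ : l1Norm (J + Pi.single t ε) = l1Norm J + 1) :
    ‖f (X + J + Pi.single t ε) - f (X + J) - ε • Δ_[Pi.single t 1] f X‖ ≤ (l1Norm J + 1) * C := by
  have hC0 : 0 ≤ C := (norm_nonneg _).trans (hC X t t)
  have lip := norm_sub_le_l1Norm_mul (g := Δ_[Pi.single t 1] f) (hC · · t) X
  rcases hε with rfl | rfl
  · have h : f (X + J + Pi.single t 1) - f (X + J) - (1 : ℤ) • Δ_[Pi.single t 1] f X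
        = Δ_[Pi.single t 1] f (X + J) - Δ_[Pi.single t 1] f X := by simp [fwdDiff]
    rw [h]
    linarith [lip J]
  -- A step down by `e_t` is minus a forward difference based at the new point `X + J - e_t`.
  · have h : f (X + J + Pi.single t (-1)) - f (X + J) - (-1 : ℤ) • Δ_[Pi.single t 1] f X
        = -(Δ_[Pi.single t 1] f (X + (J + Pi.single t (-1))) - Δ_[Pi.single t 1] f X) := by
      simp only [fwdDiff, ← add_assoc, Pi.single_neg, neg_add_cancel_right, neg_smul, one_smul]
      abel
    rw [h, norm_neg]
    exact_mod_cast hJ ▸ lip (J + Pi.single t (-1))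

theorem norm_firstOrderRemainder_le (X J : ι → ℤ) :
    ‖firstOrderRemainder f X J‖ ≤ 1 / 2 * l1Norm J * (l1Norm J + 1) * C := by
  induction J using l1Norm_induction with
  | zero => simp [firstOrderRemainder, l1Norm]
  | step J t ε hε hJ ih =>
    rw [firstOrderRemainder_add_single, hJ]
    have h_step := norm_step_sub_smul_fwdDiff_le hC X J t hε hJ
    calc _ ≤ 1 / 2 * l1Norm J * (l1Norm J + 1) * C + (l1Norm J + 1) * C :=
          norm_add_le_of_le ih h_step
      _ = _ := by push_cast; ring

end Lattice

/-- Multidimensional second-order Newton bound: if all second differences of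
`f : ℤ^d → ℝ` are bounded by `C`, then for any `X, J ∈ ℤ^d`,
`|f(X + J) − f(X) − Σ_s J_s Δ_s f(X)| ≤ (1/2)|J|₁(|J|₁+1) C`,
where `|J|₁ = Σ_s |J_s|`. -/
theorem stmt_9 {d : ℕ} (f : (Fin d → ℤ) → ℝ) (C : ℝ)
    (hC : ∀ X : Fin d → ℤ, ∀ j k : Fin d,
      |f (X + Pi.single j 1 + Pi.single k 1) - f (X + Pi.single j 1)
        - f (X + Pi.single k 1) + f X| ≤ C)
    (X J : Fin d → ℤ) :
    |f (X + J) - f X - ∑ s, (J s : ℝ) * (f (X + Pi.single s 1) - f X)| ≤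
      (1 / 2) * ((∑ s, |J s| : ℤ) : ℝ) * (((∑ s, |J s| : ℤ) : ℝ) + 1) * C := by
  have hC' : ∀ Y j k, ‖Δ_[Pi.single j 1] (Δ_[Pi.single k 1] f) Y‖ ≤ C := fun Y j k => by
    simp only [fwdDiff, Real.norm_eq_abs]
    convert hC Y j k using 2
    ring
  have h := norm_firstOrderRemainder_le hC' X J
  simpa only [firstOrderRemainder, fwdDiff, zsmul_eq_mul, Real.norm_eq_abs, cast_l1Norm] using h
end

section
/- Let λ > 0 and let Po(λ) denote the Poisson distribution. Then Σ_{l≥0} |Po(λ){l} − Po(λ){l−1}| = 2 max_{l≥0} Po(λ){l} ≤ 1/sqrt(λ), where Po(λ){−1} := 0. In particular, the total variation distance between Po(λ) and its unit translate satisfies d_TV(Po(λ), Po(λ)*ε₁) ≤ 1/(2 sqrt(λ)). -/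
/-!
The Poisson weights `p l = e^{-λ} λ^l / l!` satisfy `p (l+1) = p l · λ/(l+1)`, so they increase up
to the mode `m = ⌊λ⌋` and decrease afterwards. For such a unimodal sequence tending to `0` the sum
`∑ |p l - p (l-1)|` telescopes on either side of the mode to `p m + p m`. The bound on the mode
`p m ≤ 1/(2√λ)` comes from Stirling's lower bound `m! ≥ √(2πm) (m/e)^m` together with
`λ^m e^{-λ} ≤ m^m e^{-m}`, which gives `p m ≤ 1/√(2πm)`; for `m ≤ 1` it is checked directly.
-/

open Filter Finset Real Topology
open scoped Nat

section Unimodal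

variable {f q : ℕ → ℝ} {m : ℕ}

lemma le_of_monotoneOn_of_antitoneOn (hmono : MonotoneOn f (Set.Iic m))
    (hanti : AntitoneOn f (Set.Ici m)) (l : ℕ) : f l ≤ f m := by
  rcases le_total l m with h | h
  · exact hmono h Set.self_mem_Iic h
  · exact hanti Set.self_mem_Ici h h

lemma ciSup_eq_of_monotoneOn_of_antitoneOn (hmono : MonotoneOn f (Set.Iic m))
    (hanti : AntitoneOn f (Set.Ici m)) : ⨆ l, f l = f m :=
  le_antisymm (ciSup_le (le_of_monotoneOn_of_antitoneOn hmono hanti))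
    (le_ciSup ⟨f m, Set.forall_mem_range.2 (le_of_monotoneOn_of_antitoneOn hmono hanti)⟩ m)

variable (hq0 : q 0 = 0) (hq : ∀ l, q (l + 1) = f l)
include hq0 hq

lemma sum_range_abs_sub_shift_add (h0 : 0 ≤ f 0) (hmono : MonotoneOn f (Set.Iic m))
    (hanti : AntitoneOn f (Set.Ici m)) (N : ℕ) :
    ∑ l ∈ range (m + 1 + N), |f l - q l| = 2 * f m - f (m + N) := by
  have hup : ∑ l ∈ range (m + 1), |f l - q l| = f m := by
    rw [sum_range_succ', hq0, sub_zero, abs_of_nonneg h0]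
    have hstep : ∀ l ∈ range m, |f (l + 1) - q (l + 1)| = f (l + 1) - f l := fun l hl => by
      rw [hq, abs_of_nonneg <| sub_nonneg.2 <| hmono (Set.mem_Iic.2 (mem_range.1 hl).le)
        (Set.mem_Iic.2 (mem_range.1 hl)) l.le_succ]
    rw [sum_congr rfl hstep, sum_range_sub]
    ring
  have hdown : ∑ i ∈ range N, |f (m + 1 + i) - q (m + 1 + i)| = f m - f (m + N) := by
    have hstep : ∀ i ∈ range N, |f (m + 1 + i) - q (m + 1 + i)| = f (m + i) - f (m + (i + 1)) :=
      fun i _ => by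
        rw [add_right_comm, hq, abs_of_nonpos <| sub_nonpos.2 <|
          hanti (Set.mem_Ici.2 (m.le_add_right i)) (Set.mem_Ici.2 (by omega)) (by omega),
          neg_sub, add_assoc]
    rw [sum_congr rfl hstep, sum_range_sub' (fun i => f (m + i)), add_zero]
  rw [sum_range_add, hup, hdown]
  ring

theorem hasSum_abs_sub_shift (h0 : 0 ≤ f 0) (hmono : MonotoneOn f (Set.Iic m))
    (hanti : AntitoneOn f (Set.Ici m)) (hlim : Tendsto f atTop (𝓝 0)) :
    HasSum (fun l => |f l - q l|) (2 * f m) := by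
  rw [hasSum_iff_tendsto_nat_of_nonneg (fun l => abs_nonneg _),
    ← tendsto_add_atTop_iff_nat (m + 1)]
  simp only [add_comm _ (m + 1), sum_range_abs_sub_shift_add hq0 hq h0 hmono hanti]
  simpa [add_comm m] using tendsto_const_nhds.sub (hlim.comp (tendsto_add_atTop_nat m))

end Unimodal

lemma pow_mul_exp_neg_le_pow_div_exp {x : ℝ} (hx : 0 ≤ x) (n : ℕ) :
    x ^ n * exp (-x) ≤ (n / exp 1) ^ n := by
  obtain rfl | hn := eq_or_ne n 0
  · simpa using exp_le_one_iff.2 (neg_nonpos.2 hx)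
  have hn' : (0 : ℝ) < n := by positivity
  have hratio : (x / n) ^ n ≤ exp (x - n) := by
    calc (x / n) ^ n ≤ exp (x / n - 1) ^ n := by
          gcongr
          linarith [add_one_le_exp (x / n - 1)]
      _ = exp (x - n) := by rw [← exp_nat_mul]; congr 1; field_simp
  calc x ^ n * exp (-x) = n ^ n * (x / n) ^ n * exp (-x) := by rw [div_pow]; field_simp
    _ ≤ n ^ n * exp (x - n) * exp (-x) := by gcongr
    _ = (n / exp 1) ^ n := by
      rw [div_pow, ← exp_nat_mul, mul_one, mul_assoc, ← exp_add, div_eq_mul_inv, ← exp_neg]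
      ring_nf

noncomputable def poissonMass (lam : ℝ) (n : ℕ) : ℝ := exp (-lam) * lam ^ n / n !

section Poisson

variable {lam : ℝ}

lemma poissonMass_nonneg (hlam : 0 ≤ lam) (n : ℕ) : 0 ≤ poissonMass lam n := by
  unfold poissonMass; positivity

lemma poissonMass_succ (lam : ℝ) (n : ℕ) :
    poissonMass lam (n + 1) = poissonMass lam n * (lam / (n + 1)) := by
  simp only [poissonMass, Nat.factorial_succ, Nat.cast_mul, Nat.cast_succ, pow_succ]
  field_simp

lemma monotoneOn_poissonMass (hlam : 0 ≤ lam) :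
    MonotoneOn (poissonMass lam) (Set.Iic ⌊lam⌋₊) := by
  refine monotoneOn_of_le_succ Set.ordConnected_Iic fun n _ _ hn => ?_
  have hn : (n : ℝ) + 1 ≤ lam := by
    exact_mod_cast (Nat.le_floor_iff hlam).1 (Order.succ_eq_add_one n ▸ hn)
  rw [Order.succ_eq_add_one, poissonMass_succ]
  exact le_mul_of_one_le_right (poissonMass_nonneg hlam n) ((one_le_div (by positivity)).2 hn)

lemma antitoneOn_poissonMass (hlam : 0 ≤ lam) :
    AntitoneOn (poissonMass lam) (Set.Ici ⌊lam⌋₊) := by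
  refine antitoneOn_of_succ_le Set.ordConnected_Ici fun n _ hn _ => ?_
  have hn : lam ≤ (n : ℝ) + 1 :=
    (Nat.lt_floor_add_one lam).le.trans (by exact_mod_cast Nat.add_le_add_right hn 1)
  rw [Order.succ_eq_add_one, poissonMass_succ]
  exact mul_le_of_le_one_right (poissonMass_nonneg hlam n) ((div_le_one (by positivity)).2 hn)

lemma tendsto_poissonMass_atTop (lam : ℝ) : Tendsto (poissonMass lam) atTop (𝓝 0) := by
  have h := (FloorSemiring.tendsto_pow_div_factorial_atTop lam).const_mul (exp (-lam))
  rw [mul_zero] at h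
  exact h.congr fun n => (mul_div_assoc _ _ _).symm

lemma poissonMass_le_one_div_sqrt_two_pi_mul (hlam : 0 ≤ lam) {n : ℕ} (hn : n ≠ 0) :
    poissonMass lam n ≤ 1 / √(2 * π * n) := by
  have hstirling : 0 < √(2 * π * n) * (n / exp 1) ^ n := by positivity
  calc poissonMass lam n ≤ lam ^ n * exp (-lam) / (√(2 * π * n) * (n / exp 1) ^ n) := by
        rw [poissonMass, mul_comm (exp _)]
        exact div_le_div_of_nonneg_left (by positivity) hstirling
          (Stirling.le_factorial_stirling n)
    _ ≤ (n / exp 1) ^ n / (√(2 * π * n) * (n / exp 1) ^ n) := by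
        gcongr; exact pow_mul_exp_neg_le_pow_div_exp hlam n
    _ = 1 / √(2 * π * n) := by field_simp

lemma poissonMass_le_of_le_one (hlam : 0 < lam) {n : ℕ} (hn : n ≤ 1) :
    poissonMass lam n ≤ 1 / (2 * √lam) := by
  have hs := sq_sqrt hlam.le
  have hs0 := sqrt_pos.2 hlam
  have hamgm : 2 * √lam ≤ 1 + lam := by nlinarith [sq_nonneg (√lam - 1)]
  rw [poissonMass, exp_neg, le_div_iff₀ (by positivity)]
  interval_cases n
  · calc _ = 2 * √lam / exp lam := by simp; ring
      _ ≤ 1 := (div_le_one (exp_pos _)).2 (hamgm.trans (by linarith [add_one_le_exp lam]))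
  · -- `(λ - 2)² (λ + 1) ≥ 0` is what makes the cubic Taylor polynomial of `exp` exceed `λ + λ²`
    have hcubic : lam + lam ^ 2 ≤ exp lam := by
      have := sum_le_exp_of_nonneg hlam.le 4
      simp only [sum_range_succ, sum_range_zero, Nat.factorial] at this
      norm_num at this
      nlinarith [mul_nonneg (sq_nonneg (lam - 2)) (by linarith : (0 : ℝ) ≤ lam + 1)]
    calc _ = lam * (2 * √lam) / exp lam := by simp; ring
      _ ≤ 1 := (div_le_one (exp_pos _)).2 (by nlinarith)

theorem poissonMass_floor_le (hlam : 0 < lam) : poissonMass lam ⌊lam⌋₊ ≤ 1 / (2 * √lam) := by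
  rcases le_or_gt ⌊lam⌋₊ 1 with hm | hm
  · exact poissonMass_le_of_le_one hlam hm
  refine (poissonMass_le_one_div_sqrt_two_pi_mul hlam.le (by omega)).trans
    (one_div_le_one_div_of_le (by positivity) ?_)
  have hm : (2 : ℝ) ≤ ⌊lam⌋₊ := by exact_mod_cast hm
  have hlt := Nat.lt_floor_add_one lam
  rw [show 2 * √lam = √(2 ^ 2 * lam) by simp [sqrt_mul]]
  exact sqrt_le_sqrt (by nlinarith [pi_gt_three])

end Poisson

/-- For the Poisson distribution `Po(λ)` with `λ > 0`, the sum of absolute successive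
differences of its pmf equals twice its maximum value and is at most `1/√λ`; in
particular `d_TV(Po(λ), Po(λ)∗ε₁) ≤ 1/(2√λ)`. -/
theorem stmt_15 (lam : ℝ) (hlam : 0 < lam)
    (p q : ℕ → ℝ)
    (hp : ∀ l : ℕ, p l = Real.exp (-lam) * lam ^ l / Nat.factorial l)
    (hq0 : q 0 = 0) (hq : ∀ l : ℕ, q (l + 1) = p l) :
    (∑' l : ℕ, |p l - q l|) = 2 * (⨆ l : ℕ, p l) ∧
    2 * (⨆ l : ℕ, p l) ≤ 1 / Real.sqrt lam ∧
    (1 / 2) * ∑' l : ℕ, |p l - q l| ≤ 1 / (2 * Real.sqrt lam) := by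
  obtain rfl : p = poissonMass lam := funext hp
  have hmono := monotoneOn_poissonMass hlam.le
  have hanti := antitoneOn_poissonMass hlam.le
  have hsup : ⨆ l, poissonMass lam l = poissonMass lam ⌊lam⌋₊ :=
    ciSup_eq_of_monotoneOn_of_antitoneOn hmono hanti
  have hsum : ∑' l, |poissonMass lam l - q l| = 2 * ⨆ l, poissonMass lam l := by
    rw [hsup]
    exact (hasSum_abs_sub_shift hq0 hq (poissonMass_nonneg hlam.le 0) hmono hanti
      (tendsto_poissonMass_atTop lam)).tsum_eq
  have hmode := poissonMass_floor_le hlam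
  have hsqrt : 1 / √lam = 2 * (1 / (2 * √lam)) := by field_simp
  refine ⟨hsum, ?_, ?_⟩
  · rw [hsup]; linarith
  · rw [hsum, hsup]; linarith
end
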